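/- arXiv:1203.3106 — 3 statements merged into one kernel-verified Lean document; each statement's English description precedes it below -/
import Mathlib

section
/- Let Q ⊂ ℝ^d be a closed axis-parallel cube of side length δ, let S ⊆ ℝ^d be a Lebesgue measurable set, and let ε > 0 satisfy 2ε ≤ δ. Then the Lebesgue measure satisfies vol( (Q ∩ S)_{2ε} ) ≤ 3^d · vol( Q ∩ S_{2ε} ). -/
/-!
Fold each coordinate back into `[a j, b j]` by one of three maps: the identity or the
reflection in one of the two endpoints. If `z` lies within `r ≤ b j - a j` of a point `y` of the
box, the folded point lies in the box and is no farther from `y`, so the `r`-enlargement of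
`Q ∩ S` is covered by the `3^d` preimages of `Q ∩ S_r` under these measure-preserving foldings.
-/

open MeasureTheory

variable {ι : Type*} [Fintype ι]

/-- Open `r`-enlargement for the Euclidean distance, not the sup distance carried by `ι → ℝ`. -/
def euclidThickening (r : ℝ) (A : Set (ι → ℝ)) : Set (ι → ℝ) :=
  {z | ∃ y ∈ A, √(∑ j, (z j - y j) ^ 2) < r}

def reflectIcc (l u : ℝ) : Fin 3 → ℝ → ℝ
  | 0 => id
  | 1 => fun t => 2 * l - t
  | 2 => fun t => 2 * u - t

theorem measurePreserving_reflectIcc (l u : ℝ) (s : Fin 3) :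
    MeasurePreserving (reflectIcc l u s) volume volume := by
  fin_cases s
  · exact MeasurePreserving.id volume
  · exact Measure.measurePreserving_sub_left volume (2 * l)
  · exact Measure.measurePreserving_sub_left volume (2 * u)

theorem exists_reflectIcc_mem_Icc_abs_sub_le {l u y z : ℝ} (hy : y ∈ Set.Icc l u)
    (hzy : |z - y| ≤ u - l) :
    ∃ s, reflectIcc l u s z ∈ Set.Icc l u ∧ |reflectIcc l u s z - y| ≤ |z - y| := by
  obtain ⟨hly, hyu⟩ := hy
  rw [abs_le] at hzy
  rcases lt_or_ge z l with hzl | hlz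
  · refine ⟨1, ?_, ?_⟩ <;> simp only [reflectIcc, Set.mem_Icc]
    · constructor <;> linarith
    · rw [abs_of_neg (by linarith : z - y < 0), abs_le]
      constructor <;> linarith
  rcases le_or_gt z u with hzu | huz
  · exact ⟨0, ⟨hlz, hzu⟩, le_rfl⟩
  · refine ⟨2, ?_, ?_⟩ <;> simp only [reflectIcc, Set.mem_Icc]
    · constructor <;> linarith
    · rw [abs_of_pos (by linarith : 0 < z - y), abs_le]
      constructor <;> linarith

def reflectPi (a b : ι → ℝ) (σ : ι → Fin 3) (x : ι → ℝ) : ι → ℝ :=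
  fun j => reflectIcc (a j) (b j) (σ j) (x j)

theorem measurePreserving_reflectPi (a b : ι → ℝ) (σ : ι → Fin 3) :
    MeasurePreserving (reflectPi a b σ) volume volume :=
  measurePreserving_pi _ _ fun j => measurePreserving_reflectIcc (a j) (b j) (σ j)

theorem abs_sub_le_sqrt_sum_sq (z y : ι → ℝ) (j : ι) :
    |z j - y j| ≤ √(∑ i, (z i - y i) ^ 2) := by
  rw [← Real.sqrt_sq_eq_abs]
  exact Real.sqrt_le_sqrt <|
    Finset.single_le_sum (fun i _ => sq_nonneg (z i - y i)) (Finset.mem_univ j)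

theorem sqrt_sum_sq_le_of_abs_le {w z y : ι → ℝ} (h : ∀ j, |w j - y j| ≤ |z j - y j|) :
    √(∑ j, (w j - y j) ^ 2) ≤ √(∑ j, (z j - y j) ^ 2) :=
  Real.sqrt_le_sqrt <| Finset.sum_le_sum fun j _ => sq_le_sq.2 (h j)

theorem euclidThickening_Icc_inter_subset_iUnion_preimage {a b : ι → ℝ} {r : ℝ}
    (hr : ∀ j, r ≤ b j - a j) (S : Set (ι → ℝ)) :
    euclidThickening r (Set.Icc a b ∩ S) ⊆
      ⋃ σ, reflectPi a b σ ⁻¹' (Set.Icc a b ∩ euclidThickening r S) := by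
  rintro z ⟨y, ⟨hyQ, hyS⟩, hzy⟩
  have hfold : ∀ j, ∃ s, reflectIcc (a j) (b j) s (z j) ∈ Set.Icc (a j) (b j) ∧
      |reflectIcc (a j) (b j) s (z j) - y j| ≤ |z j - y j| := fun j =>
    exists_reflectIcc_mem_Icc_abs_sub_le ⟨hyQ.1 j, hyQ.2 j⟩
      ((abs_sub_le_sqrt_sum_sq z y j).trans (hzy.le.trans (hr j)))
  choose σ hσQ hσy using hfold
  refine Set.mem_iUnion.2 ⟨σ, ⟨fun j => (hσQ j).1, fun j => (hσQ j).2⟩, y, hyS, ?_⟩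
  exact (sqrt_sum_sq_le_of_abs_le hσy).trans_lt hzy

theorem measure_le_card_mul_of_subset_iUnion_preimage {α β κ : Type*} [Fintype κ]
    [MeasurableSpace α] [MeasurableSpace β] {μ : Measure α} {ν : Measure β}
    {f : κ → α → β} (hf : ∀ k, MeasurePreserving (f k) μ ν) {s : Set α} {A : Set β}
    (hs : s ⊆ ⋃ k, f k ⁻¹' A) :
    μ s ≤ Fintype.card κ * ν A :=
  calc μ s ≤ ∑ k, μ (f k ⁻¹' A) := (measure_mono hs).trans (measure_iUnion_fintype_le _ _)
    _ ≤ ∑ _k : κ, ν A := Finset.sum_le_sum fun k _ => (hf k).measure_preimage_le A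
    _ = Fintype.card κ * ν A := by simp

theorem volume_euclidThickening_Icc_inter_le {a b : ι → ℝ} {r : ℝ}
    (hr : ∀ j, r ≤ b j - a j) (S : Set (ι → ℝ)) :
    volume (euclidThickening r (Set.Icc a b ∩ S)) ≤
      3 ^ Fintype.card ι * volume (Set.Icc a b ∩ euclidThickening r S) := by
  classical
  have h := measure_le_card_mul_of_subset_iUnion_preimage (measurePreserving_reflectPi a b)
    (euclidThickening_Icc_inter_subset_iUnion_preimage hr S)
  simpa [Fintype.card_fun] using h

theorem cube_intersection_enlargement_volume_bound_general
    (d : ℕ) (a : Fin d → ℝ) (δ ε : ℝ) (S : Set (Fin d → ℝ))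
    (hεδ : 2 * ε ≤ δ) :
    volume {z : Fin d → ℝ | ∃ y ∈ Set.Icc a (fun j => a j + δ) ∩ S,
        Real.sqrt (∑ j, (z j - y j) ^ 2) < 2 * ε} ≤
      3 ^ d * volume (Set.Icc a (fun j => a j + δ) ∩
        {z : Fin d → ℝ | ∃ y ∈ S, Real.sqrt (∑ j, (z j - y j) ^ 2) < 2 * ε}) := by
  have h := volume_euclidThickening_Icc_inter_le (b := fun j => a j + δ) (r := 2 * ε)
    (fun _ => by linarith) S
  rw [Fintype.card_fin] at h
  exact h

/-- **The reflection argument in the proof of Theorem 1 of Kolassa–Robinson.**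
If `Q ⊂ ℝ^d` is a closed axis-parallel cube of side `δ`, `S` is measurable and
`0 < 2ε ≤ δ`, then the Lebesgue measure of the open Euclidean `2ε`-enlargement of `Q ∩ S`
is at most `3^d` times the measure of `Q` intersected with the `2ε`-enlargement of `S`. -/
theorem cube_intersection_enlargement_volume_bound
    (d : ℕ) (a : Fin d → ℝ) (δ ε : ℝ) (S : Set (Fin d → ℝ))
    (hS : MeasurableSet S) (hε : 0 < ε) (hεδ : 2 * ε ≤ δ) :
    volume {z : Fin d → ℝ | ∃ y ∈ Set.Icc a (fun j => a j + δ) ∩ S,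
        Real.sqrt (∑ j, (z j - y j) ^ 2) < 2 * ε} ≤
      3 ^ d * volume (Set.Icc a (fun j => a j + δ) ∩
        {z : Fin d → ℝ | ∃ y ∈ S, Real.sqrt (∑ j, (z j - y j) ^ 2) < 2 * ε}) :=
  cube_intersection_enlargement_volume_bound_general d a δ ε S hεδ
end

section
/- For every integer d ≥ 1 and constants K > 0 and c₀ > 0 there exist constants C' and n₀, depending only on d, K, c₀, such that the following holds. Let G : (0,∞) → (0,∞) be continuously differentiable with G(v) ≥ c₀, |G(v) − 1| ≤ K v² and |G'(v)| ≤ K v for all v > 0. Then for every n ≥ n₀ and every u > 0, setting u* = u − log(G(u))/(n u), one has u* > 0 and | ∫_u^∞ v^{d−1} e^{−n v²/2} G(v) dv − ∫_{u*}^∞ w^{d−1} e^{−n w²/2} dw | ≤ (C'/n) ∫_{u*}^∞ w^{d−1} e^{−n w²/2} dw. -/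
open MeasureTheory Real Set Filter

/-!
For large `n` the substitution `v ↦ v* = v - log G(v) / (n v)` is an increasing bijection of
`(u, ∞)` onto `(u*, ∞)`, and with `δ = log G(v) / (n v²)`
`v*^(d-1) e^(-n v*²/2) = v^(d-1) e^(-n v²/2) G(v) (1 - δ)^(d-1) e^(-n v² δ² / 2)`.
Since `|log G(v)| = O(min(v, v²))`, the quantities `δ`, `n v² δ²` and `dv*/dv - 1` are all
`O(1/n)` uniformly in `v`, so after the change of variables the two integrands agree pointwise up
to a factor `1 + O(1/n)`.
-/

lemma abs_log_le_abs_sub_one_div_min {x : ℝ} (hx : 0 < x) : |log x| ≤ |x - 1| / min x 1 := by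
  rw [le_div_iff₀ (lt_min hx one_pos)]
  rcases le_total 1 x with h | h
  · rw [min_eq_right h, mul_one, abs_of_nonneg (log_nonneg h), abs_of_nonneg (by linarith)]
    exact log_le_sub_one_of_pos hx
  · rw [min_eq_left h, abs_of_nonpos (log_nonpos hx.le h), abs_of_nonpos (by linarith)]
    have := mul_le_mul_of_nonneg_left (one_sub_inv_le_log_of_pos hx) hx.le
    rw [mul_sub, mul_inv_cancel₀ hx.ne', mul_one] at this
    linarith

lemma log_one_add_mul_sq_le {K v : ℝ} (hK : 0 ≤ K) (hv : 0 ≤ v) :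
    log (1 + K * v ^ 2) ≤ 2 * √K * v := by
  have h : 0 < 1 + √K * v := by positivity
  calc log (1 + K * v ^ 2) ≤ log ((1 + √K * v) ^ 2) := by
        gcongr
        nlinarith [sq_sqrt hK, sqrt_nonneg K]
    _ = 2 * log (1 + √K * v) := by rw [log_pow]; norm_num
    _ ≤ 2 * √K * v := by linarith [log_le_sub_one_of_pos h]

lemma abs_one_add_pow_sub_one_le (m : ℕ) {x : ℝ} (hx : |x| ≤ 1) :
    |(1 + x) ^ m - 1| ≤ m * 2 ^ m * |x| := by
  have hmax : max |1 + x| |1| ≤ 2 :=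
    max_le ((abs_add_le _ _).trans (by rw [abs_one]; linarith)) (by norm_num)
  calc |(1 + x) ^ m - 1| = |(1 + x) ^ m - 1 ^ m| := by rw [one_pow]
    _ ≤ |1 + x - 1| * m * max |1 + x| |1| ^ (m - 1) := abs_pow_sub_pow_le _ _ _
    _ ≤ |x| * m * 2 ^ m := by
        rw [add_sub_cancel_left]
        gcongr
        exact (pow_le_pow_left₀ (by positivity) hmax _).trans
          (pow_le_pow_right₀ one_le_two (Nat.sub_le m 1))
    _ = m * 2 ^ m * |x| := by ring

lemma abs_mul_sub_one_le {a b α β : ℝ} (ha : |a - 1| ≤ α) (hb : |b - 1| ≤ β) (hβ : β ≤ 1) :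
    |a * b - 1| ≤ 2 * α + β := by
  have hb2 : |b| ≤ 2 := by linarith [abs_sub_abs_le_abs_sub b 1, abs_one (α := ℝ)]
  calc |a * b - 1| = |(a - 1) * b + (b - 1)| := by ring_nf
    _ ≤ |a - 1| * |b| + |b - 1| := (abs_add_le _ _).trans_eq (by rw [abs_mul])
    _ ≤ α * 2 + β := by gcongr; exact (abs_nonneg _).trans ha
    _ = 2 * α + β := by ring

lemma abs_integral_sub_integral_le_of_abs_sub_le_mul {α : Type*} [MeasurableSpace α]
    {μ : Measure α} {f F : α → ℝ} {ε : ℝ} (hf : AEStronglyMeasurable f μ) (hF : Integrable F μ)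
    (hf₀ : ∀ᵐ x ∂μ, 0 ≤ f x) (hfF : ∀ᵐ x ∂μ, |F x - f x| ≤ ε * f x) (hε₀ : 0 ≤ ε)
    (hε : ε ≤ 1 / 2) :
    |∫ x, f x ∂μ - ∫ x, F x ∂μ| ≤ 2 * ε * ∫ x, F x ∂μ := by
  have hf_le : ∀ᵐ x ∂μ, f x ≤ 2 * F x := by
    filter_upwards [hf₀, hfF] with x h₀ h
    nlinarith [(abs_le.1 h).1, mul_nonneg (by linarith : (0 : ℝ) ≤ 1 - 2 * ε) h₀]
  have hfi : Integrable f μ := (hF.const_mul 2).mono' hf <| by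
    filter_upwards [hf₀, hf_le] with x h₀ h
    rwa [norm_of_nonneg h₀]
  have hint_le : ∫ x, f x ∂μ ≤ 2 * ∫ x, F x ∂μ := by
    rw [← integral_const_mul]
    exact integral_mono_ae hfi (hF.const_mul 2) hf_le
  calc |∫ x, f x ∂μ - ∫ x, F x ∂μ| = |∫ x, (F x - f x) ∂μ| := by
        rw [integral_sub hF hfi, abs_sub_comm]
    _ ≤ ∫ x, |F x - f x| ∂μ := abs_integral_le_integral_abs
    _ ≤ ∫ x, ε * f x ∂μ := integral_mono_ae (hF.sub hfi).abs (hfi.const_mul ε) hfF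
    _ = ε * ∫ x, f x ∂μ := integral_const_mul _ _
    _ ≤ 2 * ε * ∫ x, F x ∂μ := by nlinarith

lemma StrictMonoOn.image_Ioi_eq_Ioi {α δ : Type*} [ConditionallyCompleteLinearOrder α]
    [TopologicalSpace α] [OrderTopology α] [DenselyOrdered α] [LinearOrder δ]
    [TopologicalSpace δ] [OrderClosedTopology δ] {f : α → δ} {a : α}
    (hmono : StrictMonoOn f (Ici a)) (hf : ContinuousOn f (Ici a))
    (htop : Tendsto f atTop atTop) : f '' Ioi a = Ioi (f a) := by
  refine Subset.antisymm ?_ (intermediate_value_Ioi hf htop)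
  rintro _ ⟨x, hx, rfl⟩
  exact hmono self_mem_Ici (mem_Ici_of_Ioi hx) hx

lemma integrableOn_and_integral_Ioi_mul_comp {φ φ' g : ℝ → ℝ} {u : ℝ}
    (hφ : ∀ v ∈ Ici u, HasDerivAt φ (φ' v) v) (hφ' : ∀ v ∈ Ioi u, 0 < φ' v)
    (htop : Tendsto φ atTop atTop) (hg : IntegrableOn g (Ioi (φ u))) :
    IntegrableOn (fun v ↦ φ' v * g (φ v)) (Ioi u) ∧
      ∫ v in Ioi u, φ' v * g (φ v) = ∫ w in Ioi (φ u), g w := by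
  have hcont : ContinuousOn φ (Ici u) := fun v hv ↦ (hφ v hv).continuousAt.continuousWithinAt
  have hmono : StrictMonoOn φ (Ici u) := strictMonoOn_of_deriv_pos (convex_Ici u) hcont
    fun v hv ↦ by
      rw [interior_Ici] at hv
      rw [(hφ v (mem_Ici_of_Ioi hv)).deriv]
      exact hφ' v hv
  have hderiv : ∀ v ∈ Ioi u, HasDerivWithinAt φ (φ' v) (Ioi u) v :=
    fun v hv ↦ (hφ v (mem_Ici_of_Ioi hv)).hasDerivWithinAt
  have hinj : InjOn φ (Ioi u) := hmono.injOn.mono Ioi_subset_Ici_self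
  have habs : EqOn (fun v ↦ |φ' v| • g (φ v)) (fun v ↦ φ' v * g (φ v)) (Ioi u) :=
    fun v hv ↦ by simp only [abs_of_pos (hφ' v hv), smul_eq_mul]
  rw [← hmono.image_Ioi_eq_Ioi hcont htop] at hg ⊢
  refine ⟨?_, ?_⟩
  · exact ((integrableOn_image_iff_integrableOn_abs_deriv_smul measurableSet_Ioi hderiv hinj
      g).1 hg).congr_fun habs measurableSet_Ioi
  · rw [integral_image_eq_integral_abs_deriv_smul measurableSet_Ioi hderiv hinj,
      setIntegral_congr_fun measurableSet_Ioi habs]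

noncomputable def radialDensity (d : ℕ) (n w : ℝ) : ℝ := w ^ (d - 1) * exp (-n * w ^ 2 / 2)

lemma continuous_radialDensity (d : ℕ) (n : ℝ) : Continuous (radialDensity d n) := by
  unfold radialDensity; fun_prop

lemma radialDensity_nonneg (d : ℕ) (n : ℝ) {w : ℝ} (hw : 0 ≤ w) : 0 ≤ radialDensity d n w := by
  unfold radialDensity; positivity

lemma integrableOn_radialDensity (d : ℕ) {n a : ℝ} (hn : 0 < n) (ha : 0 ≤ a) :
    IntegrableOn (radialDensity d n) (Ioi a) := by
  have h := (integrableOn_rpow_mul_exp_neg_mul_sq (half_pos hn)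
    (neg_one_lt_zero.trans_le (Nat.cast_nonneg (d - 1)))).mono_set (Ioi_subset_Ioi ha)
  refine h.congr_fun (fun w _ ↦ ?_) measurableSet_Ioi
  simp only [rpow_natCast, radialDensity]
  ring_nf

/-- The paper's identity `e^(-n v*²/2) = e^(-n v²/2) G(v) e^(-(log G(v))² / (2 n v²))`,
with `L = log G(v)`. -/
lemma radialDensity_sub_div (d : ℕ) {n v : ℝ} (hn : n ≠ 0) (hv : v ≠ 0) (L : ℝ) :
    radialDensity d n (v - L / (n * v)) = radialDensity d n v * exp L *
      ((1 - L / (n * v ^ 2)) ^ (d - 1) * exp (-(L ^ 2 / (2 * n * v ^ 2)))) := by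
  have hpoint : v - L / (n * v) = v * (1 - L / (n * v ^ 2)) := by field_simp
  have hexp : -n * (v * (1 - L / (n * v ^ 2))) ^ 2 / 2 =
      -n * v ^ 2 / 2 + L + -(L ^ 2 / (2 * n * v ^ 2)) := by field_simp; ring
  rw [radialDensity, radialDensity, hpoint, mul_pow, hexp, exp_add, exp_add]
  ring

noncomputable def adjustedPoint (G : ℝ → ℝ) (n v : ℝ) : ℝ := v - log (G v) / (n * v)

lemma hasDerivAt_adjustedPoint {G : ℝ → ℝ} {G' n v : ℝ} (hG : HasDerivAt G G' v)
    (hGv : G v ≠ 0) (hn : n ≠ 0) (hv : v ≠ 0) :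
    HasDerivAt (adjustedPoint G n) (1 - G' / (n * v * G v) + log (G v) / (n * v ^ 2)) v := by
  refine ((hasDerivAt_id' v).sub
    ((hG.log hGv).div ((hasDerivAt_id' v).const_mul n) (mul_ne_zero hn hv))).congr_deriv ?_
  field_simp
  ring

lemma half_le_sub_div {n v L M : ℝ} (hn : 0 < n) (hv : 0 < v) (hL : |L| ≤ M * v ^ 2)
    (hM : 4 * M ≤ n) : v / 2 ≤ v - L / (n * v) := by
  have : L / (n * v) ≤ v / 4 := by
    rw [div_le_iff₀ (by positivity)]
    nlinarith [le_abs_self L, mul_le_mul_of_nonneg_right hM (sq_nonneg v)]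
  linarith

lemma abs_pow_mul_exp_mul_sub_one_le (m : ℕ) {n v L J M C : ℝ} (hn : 0 < n) (hv : 0 < v)
    (hL₂ : |L| ≤ M * v ^ 2) (hL₁ : |L| ≤ M * v) (hJ : |J - 1| ≤ C / n)
    (hMn : M ≤ n) (hM2n : M ^ 2 ≤ n) (hCn : C ≤ n) :
    |(1 - L / (n * v ^ 2)) ^ m * exp (-(L ^ 2 / (2 * n * v ^ 2))) * J - 1| ≤
      (4 * ((m : ℝ) * 2 ^ m * M) + 2 * M ^ 2 + C) / n := by
  have hδ : |L / (n * v ^ 2)| ≤ M / n := by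
    rw [abs_div, abs_of_pos (show 0 < n * v ^ 2 by positivity), div_le_div_iff₀ (by positivity) hn]
    nlinarith
  have ht : |L ^ 2 / (2 * n * v ^ 2)| ≤ M ^ 2 / (2 * n) := by
    rw [abs_of_nonneg (by positivity)]
    have hL₁' : L ^ 2 ≤ (M * v) ^ 2 := by
      rw [← sq_abs]
      exact pow_le_pow_left₀ (abs_nonneg L) hL₁ 2
    calc L ^ 2 / (2 * n * v ^ 2) ≤ (M * v) ^ 2 / (2 * n * v ^ 2) := by gcongr
      _ = M ^ 2 / (2 * n) := by field_simp
  have hpow : |(1 - L / (n * v ^ 2)) ^ m - 1| ≤ (m : ℝ) * 2 ^ m * M / n := by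
    have hδ₁ : |-(L / (n * v ^ 2))| ≤ 1 := by
      rw [abs_neg]; exact hδ.trans ((div_le_one hn).2 hMn)
    calc |(1 - L / (n * v ^ 2)) ^ m - 1|
        ≤ (m : ℝ) * 2 ^ m * |-(L / (n * v ^ 2))| := by
          rw [sub_eq_add_neg (1 : ℝ)]; exact abs_one_add_pow_sub_one_le _ hδ₁
      _ ≤ (m : ℝ) * 2 ^ m * (M / n) := by rw [abs_neg]; gcongr
      _ = (m : ℝ) * 2 ^ m * M / n := by ring
  have hexp : |exp (-(L ^ 2 / (2 * n * v ^ 2))) - 1| ≤ M ^ 2 / n := by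
    have ht₁ : |-(L ^ 2 / (2 * n * v ^ 2))| ≤ 1 := by
      rw [abs_neg]
      exact ht.trans ((div_le_one (by positivity)).2 (by linarith))
    calc |exp (-(L ^ 2 / (2 * n * v ^ 2))) - 1| ≤ 2 * |-(L ^ 2 / (2 * n * v ^ 2))| :=
          abs_exp_sub_one_le ht₁
      _ ≤ 2 * (M ^ 2 / (2 * n)) := by rw [abs_neg]; gcongr
      _ = M ^ 2 / n := by field_simp
  calc _ ≤ 2 * (2 * ((m : ℝ) * 2 ^ m * M / n) + M ^ 2 / n) + C / n :=
        abs_mul_sub_one_le (abs_mul_sub_one_le hpow hexp ((div_le_one hn).2 hM2n)) hJ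
          ((div_le_one hn).2 hCn)
    _ = _ := by ring

noncomputable def logBound (K c : ℝ) : ℝ := K / min c 1 + 2 * √K + |log c|

noncomputable def jacobianBound (K c : ℝ) : ℝ := K / c + logBound K c

noncomputable def substitutionBound (d : ℕ) (K c : ℝ) : ℝ :=
  4 * ((d - 1 : ℕ) * 2 ^ (d - 1) * logBound K c) + 2 * logBound K c ^ 2 + jacobianBound K c

section Bounds

variable {K c : ℝ}

lemma logBound_nonneg (hK : 0 ≤ K) (hc : 0 < c) : 0 ≤ logBound K c := by
  unfold logBound; positivity

lemma logBound_le_jacobianBound (hK : 0 ≤ K) (hc : 0 < c) : logBound K c ≤ jacobianBound K c := by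
  unfold jacobianBound; linarith [div_nonneg hK hc.le]

lemma jacobianBound_le_substitutionBound (d : ℕ) (hK : 0 ≤ K) (hc : 0 < c) :
    jacobianBound K c ≤ substitutionBound d K c := by
  have := mul_nonneg (by positivity : (0 : ℝ) ≤ (d - 1 : ℕ) * 2 ^ (d - 1)) (logBound_nonneg hK hc)
  unfold substitutionBound; nlinarith [sq_nonneg (logBound K c)]

lemma sq_logBound_le_substitutionBound (d : ℕ) (hK : 0 ≤ K) (hc : 0 < c) :
    logBound K c ^ 2 ≤ substitutionBound d K c := by
  have := mul_nonneg (by positivity : (0 : ℝ) ≤ (d - 1 : ℕ) * 2 ^ (d - 1)) (logBound_nonneg hK hc)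
  unfold substitutionBound
  linarith [logBound_nonneg hK hc, logBound_le_jacobianBound hK hc, sq_nonneg (logBound K c)]

lemma abs_log_le_logBound_mul_sq {x v : ℝ} (hK : 0 ≤ K) (hc : 0 < c) (hcx : c ≤ x)
    (hx : |x - 1| ≤ K * v ^ 2) : |log x| ≤ logBound K c * v ^ 2 := by
  have hmin : 0 < min c 1 := lt_min hc one_pos
  calc |log x| ≤ |x - 1| / min x 1 := abs_log_le_abs_sub_one_div_min (hc.trans_le hcx)
    _ ≤ K * v ^ 2 / min c 1 := by gcongr
    _ = K / min c 1 * v ^ 2 := by ring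
    _ ≤ logBound K c * v ^ 2 := by
        unfold logBound
        gcongr
        linarith [sqrt_nonneg K, abs_nonneg (log c)]

lemma abs_log_le_logBound_mul {x v : ℝ} (hK : 0 ≤ K) (hc : 0 < c) (hv : 0 < v) (hcx : c ≤ x)
    (hx : |x - 1| ≤ K * v ^ 2) : |log x| ≤ logBound K c * v := by
  rcases le_total v 1 with hv1 | hv1
  · calc |log x| ≤ logBound K c * v ^ 2 := abs_log_le_logBound_mul_sq hK hc hcx hx
      _ ≤ logBound K c * v := by
          have := logBound_nonneg hK hc
          gcongr
          nlinarith
  · have hupper : log x ≤ 2 * √K * v :=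
      (log_le_log (hc.trans_le hcx) (by linarith [(abs_le.1 hx).2])).trans
        (log_one_add_mul_sq_le hK hv.le)
    have hlower : -|log c| * v ≤ log x := by
      nlinarith [log_le_log hc hcx, neg_abs_le (log c), abs_nonneg (log c)]
    have hrest : 0 ≤ K / min c 1 * v := by have := lt_min hc one_pos; positivity
    rw [abs_le]
    unfold logBound
    constructor <;> nlinarith [sqrt_nonneg K, abs_nonneg (log c)]

lemma abs_jacobian_sub_one_le {n v x y : ℝ} (hK : 0 ≤ K) (hc : 0 < c) (hn : 0 < n) (hv : 0 < v)
    (hcx : c ≤ x) (hx : |x - 1| ≤ K * v ^ 2) (hy : |y| ≤ K * v) :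
    |1 - y / (n * v * x) + log x / (n * v ^ 2) - 1| ≤ jacobianBound K c / n := by
  have hx₀ : 0 < x := hc.trans_le hcx
  have hy' : |y / (n * v * x)| ≤ K / c / n := by
    rw [abs_div, abs_of_pos (show 0 < n * v * x by positivity)]
    calc |y| / (n * v * x) ≤ K * v / (n * v * c) := by gcongr
      _ = K / c / n := by field_simp
  have hL : |log x / (n * v ^ 2)| ≤ logBound K c / n := by
    rw [abs_div, abs_of_pos (show 0 < n * v ^ 2 by positivity)]
    calc |log x| / (n * v ^ 2) ≤ logBound K c * v ^ 2 / (n * v ^ 2) := by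
          gcongr
          exact abs_log_le_logBound_mul_sq hK hc hcx hx
      _ = logBound K c / n := by field_simp
  calc |1 - y / (n * v * x) + log x / (n * v ^ 2) - 1|
      = |-(y / (n * v * x)) + log x / (n * v ^ 2)| := by ring_nf
    _ ≤ |y / (n * v * x)| + |log x / (n * v ^ 2)| := by
        simpa only [abs_neg] using abs_add_le (-(y / (n * v * x))) (log x / (n * v ^ 2))
    _ ≤ K / c / n + logBound K c / n := add_le_add hy' hL
    _ = jacobianBound K c / n := by unfold jacobianBound; ring

end Bounds

section Substitution

variable {G : ℝ → ℝ} {K c n : ℝ}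

lemma abs_mul_radialDensity_adjustedPoint_sub_le (d : ℕ) {v G' : ℝ} (hK : 0 ≤ K) (hc : 0 < c)
    (hn₀ : 0 < n) (hn : 4 * substitutionBound d K c ≤ n) (hv : 0 < v) (hcG : c ≤ G v)
    (hG₁ : |G v - 1| ≤ K * v ^ 2) (hG' : |G'| ≤ K * v) :
    |(1 - G' / (n * v * G v) + log (G v) / (n * v ^ 2)) *
        radialDensity d n (adjustedPoint G n v) - radialDensity d n v * G v| ≤
      substitutionBound d K c / n * (radialDensity d n v * G v) := by
  have hM := logBound_le_jacobianBound hK hc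
  have hC := jacobianBound_le_substitutionBound d hK hc
  have hM2 := sq_logBound_le_substitutionBound d hK hc
  have hfactor := abs_pow_mul_exp_mul_sub_one_le (d - 1) hn₀ hv
    (abs_log_le_logBound_mul_sq hK hc hcG hG₁) (abs_log_le_logBound_mul hK hc hv hcG hG₁)
    (abs_jacobian_sub_one_le hK hc hn₀ hv hcG hG₁ hG') (by linarith) (by linarith)
    (by linarith)
  have hf₀ : 0 ≤ radialDensity d n v * G v :=
    mul_nonneg (radialDensity_nonneg d n hv.le) (hc.le.trans hcG)
  rw [adjustedPoint, radialDensity_sub_div d hn₀.ne' hv.ne', exp_log (hc.trans_le hcG),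
    show ∀ J f P : ℝ, J * (f * P) - f = f * (P * J - 1) from fun _ _ _ ↦ by ring, abs_mul,
    abs_of_nonneg hf₀]
  exact (mul_le_mul_of_nonneg_left hfactor hf₀).trans_eq (mul_comm _ _)

theorem abs_integral_sub_integral_adjustedPoint_le (d : ℕ) {u : ℝ} (hK : 0 ≤ K) (hc : 0 < c)
    (hn₀ : 0 < n) (hn : 4 * substitutionBound d K c ≤ n) (hG : DifferentiableOn ℝ G (Ioi 0))
    (hcG : ∀ v, 0 < v → c ≤ G v) (hG₁ : ∀ v, 0 < v → |G v - 1| ≤ K * v ^ 2)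
    (hG' : ∀ v, 0 < v → |deriv G v| ≤ K * v) (hu : 0 < u) :
    0 < adjustedPoint G n u ∧
      |(∫ v in Ioi u, radialDensity d n v * G v) -
          ∫ w in Ioi (adjustedPoint G n u), radialDensity d n w| ≤
        2 * substitutionBound d K c / n *
          ∫ w in Ioi (adjustedPoint G n u), radialDensity d n w := by
  set φ' : ℝ → ℝ := fun v ↦ 1 - deriv G v / (n * v * G v) + log (G v) / (n * v ^ 2)
  have hC := jacobianBound_le_substitutionBound d hK hc
  have hhalf : ∀ v, 0 < v → v / 2 ≤ adjustedPoint G n v := fun v hv ↦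
    half_le_sub_div hn₀ hv (abs_log_le_logBound_mul_sq hK hc (hcG v hv) (hG₁ v hv))
      (by linarith [logBound_le_jacobianBound hK hc])
  have hderiv : ∀ v, 0 < v → HasDerivAt (adjustedPoint G n) (φ' v) v := fun v hv ↦
    hasDerivAt_adjustedPoint ((hG v hv).differentiableAt (Ioi_mem_nhds hv)).hasDerivAt
      (hc.trans_le (hcG v hv)).ne' hn₀.ne' hv.ne'
  have hφ'_pos : ∀ v, 0 < v → 0 < φ' v := fun v hv ↦ by
    have := (abs_le.1 (abs_jacobian_sub_one_le hK hc hn₀ hv (hcG v hv) (hG₁ v hv) (hG' v hv))).1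
    have : jacobianBound K c / n < 1 := (div_lt_one hn₀).2 (by linarith [logBound_nonneg hK hc])
    linarith
  have htop : Tendsto (adjustedPoint G n) atTop atTop :=
    tendsto_atTop_mono' _ ((eventually_gt_atTop 0).mono hhalf)
      (tendsto_id.atTop_div_const two_pos)
  have hφu : 0 < adjustedPoint G n u := (half_pos hu).trans_le (hhalf u hu)
  obtain ⟨hint, hsubst⟩ := integrableOn_and_integral_Ioi_mul_comp
    (fun v hv ↦ hderiv v (hu.trans_le hv)) (fun v hv ↦ hφ'_pos v (hu.trans hv)) htop
    (integrableOn_radialDensity d hn₀ hφu.le)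
  refine ⟨hφu, ?_⟩
  rw [← hsubst, mul_div_assoc]
  refine abs_integral_sub_integral_le_of_abs_sub_le_mul (ε := substitutionBound d K c / n) ?_ hint
    ?_ ?_ (div_nonneg (by linarith [logBound_nonneg hK hc, logBound_le_jacobianBound hK hc])
      hn₀.le) ?_
  · exact ((continuous_radialDensity d n).continuousOn.mul
      (hG.continuousOn.mono fun v hv ↦ hu.trans hv)).aestronglyMeasurable measurableSet_Ioi
  · exact ae_restrict_of_forall_mem measurableSet_Ioi fun v hv ↦
      mul_nonneg (radialDensity_nonneg d n (hu.trans hv).le) (hc.le.trans (hcG v (hu.trans hv)))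
  · exact ae_restrict_of_forall_mem measurableSet_Ioi fun v hv ↦
      abs_mul_radialDensity_adjustedPoint_sub_le d hK hc hn₀ hn (hu.trans hv)
        (hcG v (hu.trans hv)) (hG₁ v (hu.trans hv)) (hG' v (hu.trans hv))
  · rw [div_le_iff₀ hn₀]; linarith

end Substitution

theorem barndorff_nielsen_substitution_general
    (d : ℕ) (K c₀ : ℝ) (hK : 0 < K) (hc₀ : 0 < c₀) :
    ∃ (C' : ℝ) (n₀ : ℕ), ∀ (n : ℕ), n₀ ≤ n →
    ∀ G : ℝ → ℝ,
      ContDiffOn ℝ 1 G (Ioi (0 : ℝ)) →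
      (∀ v : ℝ, 0 < v → c₀ ≤ G v) →
      (∀ v : ℝ, 0 < v → |G v - 1| ≤ K * v ^ 2) →
      (∀ v : ℝ, 0 < v → |deriv G v| ≤ K * v) →
      ∀ u : ℝ, 0 < u →
      0 < u - Real.log (G u) / (n * u) ∧
      |(∫ v in Ioi u, v ^ (d - 1) * exp (-(n : ℝ) * v ^ 2 / 2) * G v) -
          ∫ w in Ioi (u - Real.log (G u) / (n * u)),
            w ^ (d - 1) * exp (-(n : ℝ) * w ^ 2 / 2)| ≤
        C' / n * ∫ w in Ioi (u - Real.log (G u) / (n * u)),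
            w ^ (d - 1) * exp (-(n : ℝ) * w ^ 2 / 2) := by
  refine ⟨2 * substitutionBound d K c₀, ⌈4 * substitutionBound d K c₀⌉₊ + 1,
    fun n hn G hG hcG hG₁ hG' u hu ↦ ?_⟩
  exact abs_integral_sub_integral_adjustedPoint_le d hK.le hc₀ (Nat.cast_pos.2 (by omega))
    (Nat.lt_of_ceil_lt hn).le (hG.differentiableOn one_ne_zero) hcG hG₁ hG' hu

/-- **The one-dimensional substitution step for the Barndorff-Nielsen form**
(proof of Theorem 2 of Kolassa–Robinson). For every `d ≥ 1`, `K > 0`, `c₀ > 0` there are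
`C'`, `n₀` depending only on `d, K, c₀` such that: if `G` is `C¹` on `(0,∞)` with
`G ≥ c₀ > 0`, `|G(v) − 1| ≤ K v²` and `|G'(v)| ≤ K v`, then for all `n ≥ n₀` and `u > 0`,
the Barndorff-Nielsen adjusted point `u* = u − log(G(u))/(n u)` is positive and the change
of variables `v* = v − log G(v)/(n v)` introduces relative error at most `C'/n`:
`|∫_u^∞ v^{d−1} e^{−n v²/2} G(v) dv − ∫_{u*}^∞ w^{d−1} e^{−n w²/2} dw|
  ≤ (C'/n) ∫_{u*}^∞ w^{d−1} e^{−n w²/2} dw`. -/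
theorem barndorff_nielsen_substitution
    (d : ℕ) (hd : 1 ≤ d) (K c₀ : ℝ) (hK : 0 < K) (hc₀ : 0 < c₀) :
    ∃ (C' : ℝ) (n₀ : ℕ), ∀ (n : ℕ), n₀ ≤ n →
    ∀ G : ℝ → ℝ,
      ContDiffOn ℝ 1 G (Ioi (0 : ℝ)) →
      (∀ v : ℝ, 0 < v → c₀ ≤ G v) →
      (∀ v : ℝ, 0 < v → |G v - 1| ≤ K * v ^ 2) →
      (∀ v : ℝ, 0 < v → |deriv G v| ≤ K * v) →
      ∀ u : ℝ, 0 < u →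
      0 < u - Real.log (G u) / (n * u) ∧
      |(∫ v in Ioi u, v ^ (d - 1) * exp (-(n : ℝ) * v ^ 2 / 2) * G v) -
          ∫ w in Ioi (u - Real.log (G u) / (n * u)),
            w ^ (d - 1) * exp (-(n : ℝ) * w ^ 2 / 2)| ≤
        C' / n * ∫ w in Ioi (u - Real.log (G u) / (n * u)),
            w ^ (d - 1) * exp (-(n : ℝ) * w ^ 2 / 2) :=
  barndorff_nielsen_substitution_general d K c₀ hK hc₀
end

section
/- For every x = (x₁,…,x_{k−1}) ∈ ℝ^{k−1}, P(T₁ ≤ x₁, …, T_{k−1} ≤ x_{k−1}) = P(S₁ ≤ x | S₀ = (n₁,…,n_{k−1})), where the inequalities are coordinatewise and the conditioning event {S₀ = (n₁,…,n_{k−1})} has positive probability. Equivalently, the joint law of the group sums (T₁,…,T_{k−1}) under uniform random permutation of the population equals the conditional law of S₁ given S₀ = (n₁,…,n_{k−1}). -/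
/-!
Colour position `m` by the block containing it. A permutation `σ` moves this colouring `b` to
`σ • b = b ∘ σ⁻¹`, and `(T₁, …, T_{k−1})` is the vector of colour-class sums of `a` under
`σ • b`. As `σ` runs uniformly over all permutations, `σ • b` runs uniformly over the orbit of
`b`, i.e. over the colourings with class sizes `n₁, …, n_k`.

On the other side, the labels `I_m = e_{c(m)}` (with `e_k = 0`) realise a colouring `c` with
probability `∏_m n_{c(m)} / N`, which is the same for every colouring in that orbit. The event
`{S₀ = (n₁, …, n_{k−1})}` says exactly that `c` lies in the orbit, and `S₁` is the vector of
colour-class sums of `c`. So, given `S₀`, the colouring is uniform on the orbit, and both sides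
are the proportion of colourings in the orbit whose class sums are `≤ x`.
-/

open Finset Function MeasureTheory ProbabilityTheory Equiv

attribute [local instance] arrowAction

namespace MulAction

variable {G α : Type*} [Group G] [Fintype G] [MulAction G α] [DecidableEq α]

theorem card_filter_smul_eq_smul (b : α) (h : G) :
    #{g : G | g • b = h • b} = #{g : G | g • b = b} := by
  simp only [← Fintype.card_subtype]
  exact Fintype.card_congr <| (Equiv.mulLeft h⁻¹).subtypeEquiv fun g => by
    simp [mul_smul, inv_smul_eq_iff]

theorem card_filter_smul_eq_mul (b : α) (p : α → Prop) [DecidablePred p] :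
    #{g : G | p (g • b)} =
      #{c ∈ univ.image fun g : G => g • b | p c} * #{g : G | g • b = b} := by
  rw [card_eq_sum_card_fiberwise (f := (· • b)) (t := {c ∈ univ.image fun g : G => g • b | p c})
    (fun g hg => by simpa using hg), sum_const_nat]
  intro c hc
  obtain ⟨⟨h, -, rfl⟩, hph⟩ := by simpa using hc
  rw [filter_filter, ← card_filter_smul_eq_smul b h]
  congr 1
  exact filter_congr fun g _ => ⟨And.right, fun hg => ⟨hg ▸ hph, hg⟩⟩

theorem card_filter_smul_div_card (b : α) (p : α → Prop) [DecidablePred p] :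
    (#{g : G | p (g • b)} : ℝ) / Fintype.card G =
      #{c ∈ univ.image fun g : G => g • b | p c} / #(univ.image fun g : G => g • b) := by
  have hp := card_filter_smul_eq_mul (G := G) b p
  have htrue := card_filter_smul_eq_mul (G := G) b fun _ => True
  have hstab : #{g : G | g • b = b} ≠ 0 := (card_pos.2 ⟨1, by simp⟩).ne'
  simp only [filter_true, card_univ] at htrue
  rw [hp, htrue]
  push_cast
  rw [mul_div_mul_right _ _ (by exact_mod_cast hstab)]

end MulAction

theorem mem_image_perm_smul_iff {α β : Type*} [Fintype α] [DecidableEq α] [DecidableEq β]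
    {b c : α → β} :
    c ∈ univ.image (fun σ : Perm α => σ • b) ↔ ∀ j, #{a | c a = j} = #{a | b a = j} := by
  simp only [mem_image, mem_univ, true_and, ← Fintype.card_subtype]
  constructor
  · rintro ⟨σ, rfl⟩ j
    exact Fintype.card_congr (σ.symm.subtypeEquiv fun a => Iff.rfl)
  · intro h
    let e (j : β) : {a // c a = j} ≃ {a // b a = j} := Fintype.equivOfCardEq (h j)
    exact ⟨(Equiv.ofFiberEquiv e)⁻¹, funext (Equiv.ofFiberEquiv_map e)⟩

section Blocks

variable {k : ℕ} (n : Fin k → ℕ)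

theorem Fin.sum_univ_castLE_eq_sum_Iio (j : Fin k) :
    ∑ i : Fin j, n (Fin.castLE j.2.le i) = ∑ i ∈ Iio j, n i := by
  apply sum_bij fun i _ => Fin.castLE j.2.le i
  · intro i _
    simp [Fin.lt_def]
  · intro i _ i' _ h
    exact Fin.castLE_injective _ h
  · intro i hi
    exact ⟨⟨i, Fin.lt_def.1 (mem_Iio.1 hi)⟩, mem_univ _, rfl⟩
  · intro i _
    rfl

def blockIndex (m : Fin (∑ j, n j)) : Fin k := (finSigmaFinEquiv.symm m).1

theorem blockIndex_eq_iff {m : Fin (∑ j, n j)} {j : Fin k} :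
    blockIndex n m = j ↔ ∑ i ∈ Iio j, n i ≤ m ∧ m < ∑ i ∈ Iio j, n i + n j := by
  have hval (r : Fin (n j)) : (finSigmaFinEquiv ⟨j, r⟩ : ℕ) = ∑ i ∈ Iio j, n i + r := by
    rw [finSigmaFinEquiv_apply, Fin.sum_univ_castLE_eq_sum_Iio]
  constructor
  · rintro rfl
    obtain ⟨r, hr⟩ : ∃ r, finSigmaFinEquiv ⟨blockIndex n m, r⟩ = m :=
      ⟨(finSigmaFinEquiv.symm m).2, finSigmaFinEquiv.apply_symm_apply m⟩
    have := hval r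
    omega
  · rintro ⟨hlo, hhi⟩
    have hm : finSigmaFinEquiv ⟨j, ⟨m - ∑ i ∈ Iio j, n i, by omega⟩⟩ = m := by
      ext
      rw [hval]
      simp only
      omega
    rw [blockIndex, ← hm, Equiv.symm_apply_apply]

theorem card_blockIndex_eq (j : Fin k) : #{m | blockIndex n m = j} = n j := by
  rw [← Fintype.card_subtype, ← Fintype.card_fin (n j)]
  exact Fintype.card_congr ((finSigmaFinEquiv.symm.subtypeEquiv fun _ => Iff.rfl).trans
    (Equiv.sigmaSubtype j))

end Blocks

section Partition

variable {Ω κ : Type*} [MeasurableSpace Ω] {μ : Measure Ω} [IsProbabilityMeasure μ] [Fintype κ]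

theorem measureReal_eq_sum_of_ae_partition {E : κ → Set Ω} (hmeas : ∀ c, MeasurableSet (E c))
    (hdisj : Pairwise (Disjoint on E)) (hsum : ∑ c, μ.real (E c) = 1) {A : Set Ω}
    {C : Finset κ} (hA : ∀ c, ∀ ω ∈ E c, ω ∈ A ↔ c ∈ C) :
    μ.real A = ∑ c ∈ C, μ.real (E c) := by
  have hcover : μ (⋃ c, E c)ᶜ = 0 := by
    rw [prob_compl_eq_zero_iff (.iUnion hmeas), ← ENNReal.toReal_eq_one_iff, ← measureReal_def,
      measureReal_iUnion_fintype hdisj hmeas, hsum]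
  have hcells : A ∩ ⋃ c, E c = ⋃ c ∈ C, E c := by
    ext ω
    simp only [Set.mem_inter_iff, Set.mem_iUnion, exists_prop]
    constructor
    · rintro ⟨hωA, c, hωc⟩
      exact ⟨c, (hA c ω hωc).1 hωA, hωc⟩
    · rintro ⟨c, hc, hωc⟩
      exact ⟨(hA c ω hωc).2 hc, c, hωc⟩
  rw [measureReal_def, ← measure_inter_conull hcover, hcells, ← measureReal_def,
    measureReal_biUnion_finset (fun c _ c' _ h => hdisj h) (fun c _ => hmeas c)]

end Partition

section Independent

variable {Ω ι β γ : Type*} [MeasurableSpace Ω] {μ : Measure Ω} [IsProbabilityMeasure μ]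
  [Fintype ι] [Fintype γ] [MeasurableSpace β] [MeasurableSingletonClass β]

theorem ProbabilityTheory.iIndepFun.measureReal_eq_sum_prod {X : ι → Ω → β}
    (hX : ∀ i, Measurable (X i)) (hind : iIndepFun X μ) {v : γ → β} (hv : Injective v)
    (htot : ∀ i, ∑ j, μ.real (X i ⁻¹' {v j}) = 1) {P : (ι → β) → Prop} {C : Finset (ι → γ)}
    (hC : ∀ c, c ∈ C ↔ P (v ∘ c)) :
    μ.real {ω | P fun i => X i ω} = ∑ c ∈ C, ∏ i, μ.real (X i ⁻¹' {v (c i)}) := by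
  classical
  have hcell (c : ι → γ) :
      μ.real (⋂ i, X i ⁻¹' {v (c i)}) = ∏ i, μ.real (X i ⁻¹' {v (c i)}) := by
    rw [measureReal_def, hind.meas_iInter fun i => ⟨{v (c i)}, measurableSet_singleton _, rfl⟩,
      ENNReal.toReal_prod]
    rfl
  have hmem {c : ι → γ} {ω : Ω} : ω ∈ ⋂ i, X i ⁻¹' {v (c i)} ↔ (fun i => X i ω) = v ∘ c := by
    simp [funext_iff]
  simp_rw [← hcell]
  refine measureReal_eq_sum_of_ae_partition
    (fun c => .iInter fun i => hX i (measurableSet_singleton _)) ?_ ?_ ?_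
  · intro c c' hcc'
    exact Set.disjoint_left.2 fun ω hω hω' =>
      hcc' (hv.comp_left ((hmem.1 hω).symm.trans (hmem.1 hω')))
  · simp only [hcell]
    rw [← Fintype.prod_sum fun i j => μ.real (X i ⁻¹' {v j})]
    simp only [htot, prod_const_one]
  · intro c ω hω
    rw [hC, ← hmem.1 hω]
    rfl

end Independent

section Labels

variable {K : ℕ} {ι : Type*} [Fintype ι]

/-- The label `j` of the paper's `I_m`: the unit vector `e_j ∈ ℝ^k` with its last coordinate
dropped, so that `e_k` becomes `0`. -/
def truncUnit (K : ℕ) (j : Fin (K + 1)) : Fin K → ℝ := Pi.single j 1 ∘ Fin.castSucc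

theorem truncUnit_castSucc (i : Fin K) : truncUnit K i.castSucc = Pi.single i 1 := by
  ext i'
  simp [truncUnit, Pi.single_apply]

theorem truncUnit_last : truncUnit K (Fin.last K) = 0 := by
  ext i
  simp [truncUnit, (Fin.castSucc_lt_last i).ne]

theorem truncUnit_injective : Injective (truncUnit K) := by
  intro j j' h
  induction j using Fin.lastCases with
  | last =>
    induction j' using Fin.lastCases with
    | last => rfl
    | cast i => simpa [truncUnit_last, truncUnit_castSucc] using congrFun h i
  | cast i =>
    by_contra hne
    simpa [truncUnit, Pi.single_apply, hne] using congrFun h i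

theorem sum_truncUnit_apply (c : ι → Fin (K + 1)) (i : Fin K) :
    (∑ m, truncUnit K (c m)) i = #{m | c m = i.castSucc} := by
  simp [truncUnit, Pi.single_apply, sum_boole, eq_comm]

theorem sum_smul_truncUnit_apply (a : ι → ℝ) (c : ι → Fin (K + 1)) (i : Fin K) :
    (∑ m, a m • truncUnit K (c m)) i = ∑ m with c m = i.castSucc, a m := by
  simp [truncUnit, Pi.single_apply, sum_filter, eq_comm]

theorem sum_smul_truncUnit_perm_smul_apply (a : ι → ℝ) (b : ι → Fin (K + 1)) (σ : Perm ι)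
    (i : Fin K) :
    (∑ m, a m • truncUnit K ((σ • b) m)) i = ∑ m, if b m = i.castSucc then a (σ m) else 0 := by
  rw [sum_smul_truncUnit_apply, sum_filter, ← Equiv.sum_comp σ]
  refine sum_congr rfl fun m _ => ?_
  change (if b (σ⁻¹ (σ m)) = _ then _ else _) = _
  rw [Perm.inv_def, symm_apply_apply]

theorem sum_truncUnit_eq_iff {b c : ι → Fin (K + 1)} :
    ∑ m, truncUnit K (c m) = ∑ m, truncUnit K (b m) ↔
      ∀ j, #{m | c m = j} = #{m | b m = j} := by
  constructor
  · intro h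
    have hcast (i : Fin K) : #{m | c m = i.castSucc} = #{m | b m = i.castSucc} := by
      exact_mod_cast
        (sum_truncUnit_apply c i).symm.trans ((congrFun h i).trans (sum_truncUnit_apply b i))
    intro j
    induction j using Fin.lastCases with
    | cast i => exact hcast i
    | last =>
      have hc := card_eq_sum_card_fiberwise (f := c) (s := univ) (t := univ) fun m _ => mem_univ _
      have hb := card_eq_sum_card_fiberwise (f := b) (s := univ) (t := univ) fun m _ => mem_univ _
      rw [Fin.sum_univ_castSucc] at hc hb
      simp only [hcast] at hc
      omega
  · intro h
    ext i
    rw [sum_truncUnit_apply, sum_truncUnit_apply, h]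

end Labels

section Conditioning

variable {Ω ι : Type*} [MeasurableSpace Ω] {μ : Measure Ω} [IsProbabilityMeasure μ] [Fintype ι]
  [DecidableEq ι] {K : ℕ}

theorem measureReal_and_sum_truncUnit_eq {I : ι → Ω → Fin K → ℝ} (hI : ∀ m, Measurable (I m))
    (hind : iIndepFun I μ) (htot : ∀ m, ∑ j, μ.real (I m ⁻¹' {truncUnit K j}) = 1)
    {p : Fin (K + 1) → ℝ} (hp : ∀ m j, μ.real (I m ⁻¹' {truncUnit K j}) = p j) (a : ι → ℝ)
    (b : ι → Fin (K + 1)) (Q : (Fin K → ℝ) → Prop) [DecidablePred Q] :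
    μ.real {ω | Q (∑ m, a m • I m ω) ∧ ∑ m, I m ω = ∑ m, truncUnit K (b m)} =
      #{c ∈ univ.image (fun σ : Perm ι => σ • b) | Q (∑ m, a m • truncUnit K (c m))} *
        ∏ m, p (b m) := by
  refine (hind.measureReal_eq_sum_prod hI truncUnit_injective htot
    (P := fun y => Q (∑ m, a m • y m) ∧ ∑ m, y m = ∑ m, truncUnit K (b m))
    (C := {c ∈ univ.image (fun σ : Perm ι => σ • b) | Q (∑ m, a m • truncUnit K (c m))})
    fun c => ?_).trans ?_
  · simp only [mem_filter, mem_image_perm_smul_iff, comp_apply, sum_truncUnit_eq_iff]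
    exact and_comm
  · rw [← nsmul_eq_mul, ← sum_const]
    refine sum_congr rfl fun c hc => ?_
    obtain ⟨σ, -, rfl⟩ := mem_image.1 (mem_filter.1 hc).1
    simp only [hp]
    exact Equiv.prod_comp σ⁻¹ fun m => p (b m)

end Conditioning

theorem ksample_permutation_conditional_representation_general
    (K N : ℕ) (n : Fin (K + 1) → ℕ) (hsum : ∑ i, n i = N)
    (a : Fin N → ℝ)
    (Ω : Type) (mΩ : MeasureSpace Ω) (hprob : IsProbabilityMeasure (ℙ : Measure Ω))
    (I : Fin N → Ω → (Fin K → ℝ))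
    (hmeas : ∀ m, Measurable (I m))
    (hindep : ProbabilityTheory.iIndepFun I ℙ)
    -- `P(I_m = e_i) = n_i / N` for `i = 1, …, k − 1`
    (hlaw : ∀ m, ∀ i : Fin K,
      ((ℙ : Measure Ω) {ω : Ω | I m ω = Pi.single i 1}).toReal =
        (n i.castSucc : ℝ) / N)
    -- `P(I_m = 0) = n_k / N`
    (hlaw0 : ∀ m,
      ((ℙ : Measure Ω) {ω : Ω | I m ω = 0}).toReal = (n (Fin.last K) : ℝ) / N) :
    0 < ((ℙ : Measure Ω)
        {ω : Ω | (∑ m, I m ω) = fun i => (n i.castSucc : ℝ)}).toReal ∧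
    ∀ x : Fin K → ℝ,
      -- the permutation probability `P(T₁ ≤ x₁, …, T_{k−1} ≤ x_{k−1})`, where the
      -- group sums are `T_i(σ) = Σ_{m in block i} a_{σ(m)}` and the blocks are the
      -- consecutive index intervals of lengths `n₁, …, n_k`
      (Nat.card {σ : Equiv.Perm (Fin N) // ∀ i : Fin K,
          (∑ m : Fin N, if (∑ i' ∈ Finset.Iio i.castSucc, n i') ≤ (m : ℕ) ∧
              (m : ℕ) < (∑ i' ∈ Finset.Iio i.castSucc, n i') + n i.castSucc
            then a (σ m) else 0) ≤ x i} : ℝ) / (Nat.factorial N) =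
      ((ℙ : Measure Ω) {ω : Ω | (∀ i, (∑ m, a m • I m ω) i ≤ x i) ∧
          (∑ m, I m ω) = fun i => (n i.castSucc : ℝ)}).toReal /
        ((ℙ : Measure Ω)
          {ω : Ω | (∑ m, I m ω) = fun i => (n i.castSucc : ℝ)}).toReal := by
  subst hsum
  have hp (m : Fin _) (j : Fin (K + 1)) :
      (ℙ : Measure Ω).real (I m ⁻¹' {truncUnit K j}) = n j / (∑ i, n i : ℕ) := by
    induction j using Fin.lastCases with
    | last => rw [truncUnit_last]; exact hlaw0 m
    | cast i => rw [truncUnit_castSucc]; exact hlaw m i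
  have htot (m : Fin _) : ∑ j, (ℙ : Measure Ω).real (I m ⁻¹' {truncUnit K j}) = 1 := by
    simp only [hp, ← sum_div]
    exact_mod_cast div_self (Nat.cast_ne_zero.2 m.pos.ne')
  have hcount : (fun i => (n i.castSucc : ℝ)) = ∑ m, truncUnit K (blockIndex n m) := by
    ext i
    rw [sum_truncUnit_apply, card_blockIndex_eq]
  have hcond := measureReal_and_sum_truncUnit_eq hmeas hindep htot hp a (blockIndex n)
  have hW : 0 < ∏ m, (n (blockIndex n m) : ℝ) / (∑ i, n i : ℕ) :=
    prod_pos fun m _ => div_pos (mod_cast (finSigmaFinEquiv.symm m).2.pos) (mod_cast m.pos)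
  have h0 := hcond fun _ => True
  simp only [true_and, filter_true] at h0
  simp only [← measureReal_def, hcount, h0]
  refine ⟨mul_pos ?_ hW, fun x => ?_⟩
  · exact_mod_cast card_pos.2 ⟨_, mem_image_of_mem _ (mem_univ 1)⟩
  have h1 := hcond fun y => ∀ i, y i ≤ x i
  beta_reduce at h1
  simp only [← blockIndex_eq_iff, ← sum_smul_truncUnit_perm_smul_apply]
  have hfact : ((∑ i, n i).factorial : ℝ) = Fintype.card (Perm (Fin (∑ i, n i))) := by
    rw [Fintype.card_perm, Fintype.card_fin]
  rw [h1, mul_div_mul_right _ _ hW.ne', Nat.card_eq_fintype_card, Fintype.card_subtype, hfact]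
  exact MulAction.card_filter_smul_div_card (blockIndex n) fun c =>
    ∀ i, (∑ m, a m • truncUnit K (c m)) i ≤ x i

/-- **Conditional representation of the `k`-sample permutation distribution**
(Section 3.1 of Kolassa–Robinson, with `k = K + 1`). Let `a₁,…,a_N` be a finite population,
`n₁,…,n_k` positive integers summing to `N`, and `T_i` the sum of the `i`-th block of size
`n_i` of the values permuted by a uniform random permutation. Let `I₁,…,I_N` be i.i.d.
random vectors in `ℝ^{k−1}` with `P(I_m = e_i) = n_i/N` for `i < k` and
`P(I_m = 0) = n_k/N`, and set `S₀ = Σ_m I_m`, `S₁ = Σ_m a_m I_m`. Then the event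
`{S₀ = (n₁,…,n_{k−1})}` has positive probability and, for every `x ∈ ℝ^{k−1}`,
`P(T₁ ≤ x₁, …, T_{k−1} ≤ x_{k−1}) = P(S₁ ≤ x | S₀ = (n₁,…,n_{k−1}))`. -/
theorem ksample_permutation_conditional_representation
    (K N : ℕ) (n : Fin (K + 1) → ℕ) (hn : ∀ i, 0 < n i) (hsum : ∑ i, n i = N)
    (a : Fin N → ℝ)
    (Ω : Type) (mΩ : MeasureSpace Ω) (hprob : IsProbabilityMeasure (ℙ : Measure Ω))
    (I : Fin N → Ω → (Fin K → ℝ))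
    (hmeas : ∀ m, Measurable (I m))
    (hindep : ProbabilityTheory.iIndepFun I ℙ)
    -- `P(I_m = e_i) = n_i / N` for `i = 1, …, k − 1`
    (hlaw : ∀ m, ∀ i : Fin K,
      ((ℙ : Measure Ω) {ω : Ω | I m ω = Pi.single i 1}).toReal =
        (n i.castSucc : ℝ) / N)
    -- `P(I_m = 0) = n_k / N`
    (hlaw0 : ∀ m,
      ((ℙ : Measure Ω) {ω : Ω | I m ω = 0}).toReal = (n (Fin.last K) : ℝ) / N) :
    0 < ((ℙ : Measure Ω)
        {ω : Ω | (∑ m, I m ω) = fun i => (n i.castSucc : ℝ)}).toReal ∧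
    ∀ x : Fin K → ℝ,
      -- the permutation probability `P(T₁ ≤ x₁, …, T_{k−1} ≤ x_{k−1})`, where the
      -- group sums are `T_i(σ) = Σ_{m in block i} a_{σ(m)}` and the blocks are the
      -- consecutive index intervals of lengths `n₁, …, n_k`
      (Nat.card {σ : Equiv.Perm (Fin N) // ∀ i : Fin K,
          (∑ m : Fin N, if (∑ i' ∈ Finset.Iio i.castSucc, n i') ≤ (m : ℕ) ∧
              (m : ℕ) < (∑ i' ∈ Finset.Iio i.castSucc, n i') + n i.castSucc
            then a (σ m) else 0) ≤ x i} : ℝ) / (Nat.factorial N) =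
      ((ℙ : Measure Ω) {ω : Ω | (∀ i, (∑ m, a m • I m ω) i ≤ x i) ∧
          (∑ m, I m ω) = fun i => (n i.castSucc : ℝ)}).toReal /
        ((ℙ : Measure Ω)
          {ω : Ω | (∑ m, I m ω) = fun i => (n i.castSucc : ℝ)}).toReal :=
  ksample_permutation_conditional_representation_general K N n hsum a Ω mΩ hprob I hmeas hindep hlaw
    hlaw0
end
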